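/- If G is a graph with chromatic number χ, then the Ky Fan χ-norm of G satisfies ‖G‖_{F_χ} ≥ 2 σ₁(G), i.e., the sum of the χ largest singular values of the adjacency matrix is at least twice the largest singular value. -/

import Mathlib

/-!
Take a unit eigenvector `x` for an eigenvalue `μ` of `A = A(G)` with `|μ| = σ₁`; working with the
eigenvalue of largest modulus avoids any appeal to Perron–Frobenius. A proper `χ`-colouring cuts
`x` into its restrictions to the colour classes, and normalising these gives a matrix `E` with
orthonormal columns and a unit vector `ξ` with `x = E ξ`. The compression `M = Eᵀ A E` has zero
diagonal since colour classes are independent, so its eigenvalues `ν` sum to `0`, which forces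
`2 |ξᵀ M ξ| ≤ ∑ |ν|`. Writing `M` in the eigenbasis of `A` shows `∑ |ν| ≤ ∑ tᵢ |μᵢ|` with weights
`0 ≤ tᵢ ≤ 1` of total mass at most `χ`, which is at most the sum of the `χ` largest `|μᵢ|`, i.e.
the Ky Fan `χ`-norm, the singular values of a symmetric matrix being the `|μᵢ|`.
-/

open Finset

/-- Singular values (unsorted) of a complex matrix: square roots of eigenvalues of `A * Aᴴ`. -/
noncomputable def svalC {m n : ℕ} (A : Matrix (Fin m) (Fin n) ℂ) : Fin m → ℝ :=
  fun i => Real.sqrt ((Matrix.isHermitian_mul_conjTranspose_self A).eigenvalues i)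

/-- Singular values of a complex matrix sorted in decreasing order. -/
noncomputable def svalCSorted {m n : ℕ} (A : Matrix (Fin m) (Fin n) ℂ) : Fin m → ℝ :=
  svalC A ∘ ⇑(Tuple.sort (fun i => -(svalC A i)))

/-- Singular values (unsorted) of a real matrix. -/
noncomputable def svalR {m n : ℕ} (A : Matrix (Fin m) (Fin n) ℝ) : Fin m → ℝ :=
  fun i => Real.sqrt ((Matrix.isHermitian_mul_conjTranspose_self A).eigenvalues i)

/-- Singular values of a real matrix sorted in decreasing order. -/
noncomputable def svalRSorted {m n : ℕ} (A : Matrix (Fin m) (Fin n) ℝ) : Fin m → ℝ :=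
  svalR A ∘ ⇑(Tuple.sort (fun i => -(svalR A i)))

/-- Ky Fan `k`-norm of a complex matrix: the sum of its `k` largest singular values. -/
noncomputable def kyFanC {m n : ℕ} (A : Matrix (Fin m) (Fin n) ℂ) (k : ℕ) : ℝ :=
  ∑ i : Fin m, if (i : ℕ) < k then svalCSorted A i else 0

/-- Ky Fan `k`-norm of a real matrix. -/
noncomputable def kyFanR {m n : ℕ} (A : Matrix (Fin m) (Fin n) ℝ) (k : ℕ) : ℝ :=
  ∑ i : Fin m, if (i : ℕ) < k then svalRSorted A i else 0

/-- The adjacency matrix of a simple graph is Hermitian (over `ℝ`). -/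
lemma adjHerm {n : ℕ} (G : SimpleGraph (Fin n)) [DecidableRel G.Adj] :
    (G.adjMatrix ℝ).IsHermitian := by
  have h := G.isSymm_adjMatrix (α := ℝ)
  first
    | (rw [Matrix.IsHermitian, Matrix.conjTranspose_eq_transpose_of_trivial]; exact h)
    | simpa [Matrix.IsHermitian, Matrix.conjTranspose, Matrix.IsSymm, Matrix.transpose, Matrix.map, conj_trivial] using h

/-- Singular values of a graph (unsorted). -/
noncomputable def gsval {n : ℕ} (G : SimpleGraph (Fin n)) [DecidableRel G.Adj] : Fin n → ℝ :=
  svalR (G.adjMatrix ℝ)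

/-- Singular values of a graph sorted in decreasing order. -/
noncomputable def gsvalSorted {n : ℕ} (G : SimpleGraph (Fin n)) [DecidableRel G.Adj] : Fin n → ℝ :=
  svalRSorted (G.adjMatrix ℝ)

/-- Eigenvalues of a graph sorted in decreasing order: `geigSorted G 0 = μ₁ ≥ ⋯ ≥ μₙ`. -/
noncomputable def geigSorted {n : ℕ} (G : SimpleGraph (Fin n)) [DecidableRel G.Adj] : Fin n → ℝ :=
  (adjHerm G).eigenvalues ∘ ⇑(Tuple.sort (fun i => -((adjHerm G).eigenvalues i)))

/-- Ky Fan `k`-norm of a graph. -/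
noncomputable def kyFanG {n : ℕ} (G : SimpleGraph (Fin n)) [DecidableRel G.Adj] (k : ℕ) : ℝ :=
  kyFanR (G.adjMatrix ℝ) k

open Matrix Unitary

lemma Tuple.comp_sort_eq_comp_sort_of_perm {α : Type*} [LinearOrder α] {n : ℕ}
    {f g : Fin n → α} (h : (List.ofFn f).Perm (List.ofFn g)) :
    f ∘ Tuple.sort f = g ∘ Tuple.sort g :=
  List.ofFn_injective <| List.Perm.eq_of_sortedLE (Tuple.monotone_sort f).sortedLE_ofFn
    (Tuple.monotone_sort g).sortedLE_ofFn
    (((Tuple.sort f).ofFn_comp_perm f).trans (h.trans ((Tuple.sort g).ofFn_comp_perm g).symm))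

lemma comp_sort_neg_eq_of_perm {n : ℕ} {f g : Fin n → ℝ}
    (h : (List.ofFn f).Perm (List.ofFn g)) :
    f ∘ Tuple.sort (fun i => -f i) = g ∘ Tuple.sort (fun i => -g i) := by
  have hneg := Tuple.comp_sort_eq_comp_sort_of_perm (f := fun i => -f i) (g := fun i => -g i)
    (by simpa only [List.map_ofFn, Function.comp_def] using h.map Neg.neg)
  funext i
  simpa using congrFun hneg i

open Polynomial in
lemma Matrix.IsHermitian.ofFn_eigenvalues_perm {n : ℕ} {A : Matrix (Fin n) (Fin n) ℝ}
    (hA : A.IsHermitian) {d : Fin n → ℝ} (h : A.charpoly = ∏ i, (X - C (d i))) :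
    (List.ofFn hA.eigenvalues).Perm (List.ofFn d) := by
  have hroots := hA.roots_charpoly_eq_eigenvalues
  rw [h, Polynomial.roots_prod _ _ (by simp [Finset.prod_ne_zero_iff, X_sub_C_ne_zero])] at hroots
  simpa [Fin.univ_val_map] using hroots.symm

open Polynomial in
lemma Matrix.IsHermitian.charpoly_mul_self {n : Type*} [Fintype n] [DecidableEq n]
    {A : Matrix n n ℝ} (hA : A.IsHermitian) :
    (A * A).charpoly = ∏ i, (X - C (hA.eigenvalues i ^ 2)) := by
  have hsq : A * A = conjStarAlgAut ℝ _ hA.eigenvectorUnitary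
      (diagonal fun i => hA.eigenvalues i ^ 2) := by
    conv_lhs => rw [hA.spectral_theorem]
    rw [← map_mul, diagonal_mul_diagonal]
    simp [sq]
  rw [hsq, conjStarAlgAut_apply, charpoly_mul_comm, ← mul_assoc]
  simp [charpoly_diagonal]

lemma ofFn_svalR_perm_abs_eigenvalues {n : ℕ} {A : Matrix (Fin n) (Fin n) ℝ}
    (hA : A.IsHermitian) : (List.ofFn (svalR A)).Perm (List.ofFn fun i => |hA.eigenvalues i|) := by
  have hAA := isHermitian_mul_conjTranspose_self A
  have hperm := hAA.ofFn_eigenvalues_perm (by rw [hA.eq]; exact hA.charpoly_mul_self)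
  have hsqrt := hperm.map Real.sqrt
  simp only [List.map_ofFn, Function.comp_def, Real.sqrt_sq_eq_abs] at hsqrt
  exact hsqrt

lemma svalRSorted_eq_of_isHermitian {n : ℕ} {A : Matrix (Fin n) (Fin n) ℝ}
    (hA : A.IsHermitian) :
    svalRSorted A = (fun i => |hA.eigenvalues i|) ∘ Tuple.sort fun i => -|hA.eigenvalues i| :=
  comp_sort_neg_eq_of_perm (ofFn_svalR_perm_abs_eigenvalues hA)

lemma sum_mul_le_sum_of_threshold {ι : Type*} [Fintype ι] (s : Finset ι) {b t : ι → ℝ}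
    {β : ℝ} (hβ : 0 ≤ β) (hs : ∀ i ∈ s, β ≤ b i) (hsc : ∀ i ∉ s, b i ≤ β)
    (ht0 : ∀ i, 0 ≤ t i) (ht1 : ∀ i, t i ≤ 1) (hts : ∑ i, t i ≤ #s) :
    ∑ i, t i * b i ≤ ∑ i ∈ s, b i := by
  classical
  have hexcess : ∑ i, t i * (b i - β) ≤ ∑ i, if i ∈ s then b i - β else 0 := by
    refine sum_le_sum fun i _ => ?_
    split_ifs with hi
    · nlinarith [hs i hi, ht1 i]
    · nlinarith [hsc i hi, ht0 i]
  calc ∑ i, t i * b i = ∑ i, t i * (b i - β) + β * ∑ i, t i := by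
        rw [mul_sum, ← sum_add_distrib]; congr 1; ext i; ring
    _ ≤ ∑ i ∈ s, (b i - β) + β * #s := by
        rw [← sum_filter, filter_mem_eq_inter, univ_inter] at hexcess
        gcongr
    _ = ∑ i ∈ s, b i := by simp [sum_sub_distrib, mul_comm]

lemma sum_mul_le_sum_sorted {n k : ℕ} {b t : Fin n → ℝ} (hb : ∀ i, 0 ≤ b i)
    (ht0 : ∀ i, 0 ≤ t i) (ht1 : ∀ i, t i ≤ 1) (hts : ∑ i, t i ≤ k) :
    ∑ i, t i * b i ≤
      ∑ i : Fin n, if (i : ℕ) < k then (b ∘ Tuple.sort fun i => -b i) i else 0 := by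
  set σ := Tuple.sort fun i => -b i
  have hanti : Antitone (b ∘ σ) := fun i j hij =>
    neg_le_neg_iff.mp (Tuple.monotone_sort (fun i => -b i) hij)
  have hn : ∑ i, t i ≤ n := by
    simpa using sum_le_sum fun i (_ : i ∈ univ) => ht1 i
  rw [← Equiv.sum_comp σ, ← sum_filter]
  refine sum_mul_le_sum_of_threshold _ (β := if h : k < n then b (σ ⟨k, h⟩) else 0)
    ?_ ?_ ?_ (fun i => ht0 _) (fun i => ht1 _) ?_
  · split_ifs <;> simp [hb]
  · intro i hi
    rw [mem_filter] at hi
    split_ifs with h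
    · exact hanti (Fin.mk_le_mk.mpr hi.2.le)
    · exact hb _
  · intro i hi
    simp only [mem_filter, mem_univ, true_and, not_lt] at hi
    rw [dif_pos (hi.trans_lt i.2)]
    exact hanti (Fin.mk_le_mk.mpr hi)
  · rw [Equiv.sum_comp, Fin.card_filter_val_lt, Nat.cast_min]
    exact le_min hn hts

section OrthonormalColumns

variable {ι κ : Type*} [Fintype ι] {Z : Matrix ι κ ℝ}

lemma sum_sq_row_le_one_of_conjTranspose_mul_self [Fintype κ] [DecidableEq κ]
    (hZ : Zᴴ * Z = 1) (l : ι) :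
    ∑ c, Z l c ^ 2 ≤ 1 := by
  set P := Z * Zᴴ
  have hidem : P * P = P := by
    simp only [P, Matrix.mul_assoc, ← Matrix.mul_assoc Zᴴ, hZ, Matrix.one_mul]
  have hsymm : ∀ i j, P j i = P i j := fun i j => by simp [P, mul_apply, mul_comm]
  have hdiag : P l l = ∑ c, Z l c ^ 2 := by simp [P, mul_apply, sq]
  have hsq : P l l ^ 2 ≤ P l l := calc
    P l l ^ 2 ≤ ∑ j, P l j ^ 2 :=
      single_le_sum (f := fun j => P l j ^ 2) (fun j _ => sq_nonneg _) (mem_univ l)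
    _ = P l l := by
      conv_rhs => rw [← hidem, mul_apply]
      simp [hsymm _ l, sq]
  have hnonneg : 0 ≤ P l l := hdiag ▸ sum_nonneg fun c _ => sq_nonneg _
  nlinarith

lemma sum_sum_sq_eq_card_of_conjTranspose_mul_self [Fintype κ] [DecidableEq κ]
    (hZ : Zᴴ * Z = 1) :
    ∑ l, ∑ c, Z l c ^ 2 = Fintype.card κ := by
  rw [sum_comm]
  calc ∑ c, ∑ l, Z l c ^ 2 = ∑ c, (Zᴴ * Z) c c := by
        simp only [mul_apply, conjTranspose_apply, star_trivial, sq]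
    _ = Fintype.card κ := by rw [hZ]; simp

lemma conjTranspose_mul_diagonal_mul_apply_self [DecidableEq ι] (Z : Matrix ι κ ℝ)
    (μ : ι → ℝ) (c : κ) : (Zᴴ * diagonal μ * Z) c c = ∑ l, μ l * Z l c ^ 2 := by
  rw [mul_apply]
  simp only [mul_diagonal, conjTranspose_apply, star_trivial]
  exact sum_congr rfl fun l _ => by ring

end OrthonormalColumns

lemma sum_abs_diag_conj_diagonal_le {n k : ℕ} {κ : Type*} [Fintype κ] [DecidableEq κ]
    {Z : Matrix (Fin n) κ ℝ} (hZ : Zᴴ * Z = 1) (hk : Fintype.card κ ≤ k)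
    (μ : Fin n → ℝ) :
    ∑ c, |(Zᴴ * diagonal μ * Z) c c| ≤
      ∑ i : Fin n, if (i : ℕ) < k then
        ((fun i => |μ i|) ∘ Tuple.sort fun i => -|μ i|) i else 0 := by
  calc ∑ c, |(Zᴴ * diagonal μ * Z) c c| ≤ ∑ c, ∑ l, |μ l| * Z l c ^ 2 := by
        refine sum_le_sum fun c _ => ?_
        rw [conjTranspose_mul_diagonal_mul_apply_self]
        refine (abs_sum_le_sum_abs _ _).trans_eq (sum_congr rfl fun l _ => ?_)
        rw [abs_mul, abs_sq]
    _ = ∑ l, (∑ c, Z l c ^ 2) * |μ l| := by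
        rw [sum_comm]
        exact sum_congr rfl fun l _ => by rw [sum_mul]; exact sum_congr rfl fun c _ => mul_comm _ _
    _ ≤ _ := sum_mul_le_sum_sorted (fun i => abs_nonneg _)
        (fun l => sum_nonneg fun c _ => sq_nonneg _)
        (sum_sq_row_le_one_of_conjTranspose_mul_self hZ)
        (by rw [sum_sum_sq_eq_card_of_conjTranspose_mul_self hZ]; exact_mod_cast hk)

lemma kyFanR_eq_of_isHermitian {n : ℕ} {A : Matrix (Fin n) (Fin n) ℝ} (hA : A.IsHermitian)
    (k : ℕ) : kyFanR A k = ∑ i : Fin n, if (i : ℕ) < k then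
      ((fun i => |hA.eigenvalues i|) ∘ Tuple.sort fun i => -|hA.eigenvalues i|) i else 0 := by
  rw [kyFanR, svalRSorted_eq_of_isHermitian hA]

lemma sum_abs_eigenvalues_compression_le_kyFanR {n k : ℕ} {A : Matrix (Fin n) (Fin n) ℝ}
    (hA : A.IsHermitian) {κ : Type*} [Fintype κ] [DecidableEq κ] {E : Matrix (Fin n) κ ℝ}
    (hE : Eᴴ * E = 1) (hk : Fintype.card κ ≤ k) :
    ∑ c, |(isHermitian_conjTranspose_mul_mul E hA).eigenvalues c| ≤ kyFanR A k := by
  set hM := isHermitian_conjTranspose_mul_mul E hA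
  set U : Matrix κ κ ℝ := ↑hM.eigenvectorUnitary
  set V : Matrix (Fin n) (Fin n) ℝ := ↑hA.eigenvectorUnitary
  have hZstar : (star V * E * U)ᴴ = star U * Eᴴ * V := by
    simp [star_eq_conjTranspose, Matrix.mul_assoc]
  have hZ : (star V * E * U)ᴴ * (star V * E * U) = 1 := by
    rw [hZstar]
    simp only [Matrix.mul_assoc]
    rw [← Matrix.mul_assoc V, Unitary.mul_star_self_of_mem hA.eigenvectorUnitary.2,
      Matrix.one_mul, ← Matrix.mul_assoc Eᴴ, hE, Matrix.one_mul,
      Unitary.star_mul_self_of_mem hM.eigenvectorUnitary.2]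
  have hdiag : (star V * E * U)ᴴ * diagonal hA.eigenvalues * (star V * E * U) =
      diagonal hM.eigenvalues := by
    have hνdiag := hM.conjStarAlgAut_star_eigenvectorUnitary
    have hAdiag := hA.spectral_theorem
    simp only [conjStarAlgAut_apply, Unitary.coe_star, star_star, RCLike.ofReal_real_eq_id,
      Function.id_comp] at hνdiag hAdiag
    calc (star V * E * U)ᴴ * diagonal hA.eigenvalues * (star V * E * U)
        = star U * (Eᴴ * (V * diagonal hA.eigenvalues * star V) * E) * U := by
          rw [hZstar]; simp only [Matrix.mul_assoc]
      _ = diagonal hM.eigenvalues := by rw [← hAdiag, hνdiag]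
  have hsum := sum_abs_diag_conj_diagonal_le hZ hk hA.eigenvalues
  simp only [hdiag, diagonal_apply_eq] at hsum
  rwa [kyFanR_eq_of_isHermitian hA]

lemma two_mul_abs_sum_mul_sq_le {κ : Type*} [Fintype κ] {ν ζ : κ → ℝ}
    (hν : ∑ c, ν c = 0) (hζ : ∑ c, ζ c ^ 2 = 1) :
    2 * |∑ c, ν c * ζ c ^ 2| ≤ ∑ c, |ν c| := by
  have hζ1 : ∀ c, ζ c ^ 2 ≤ 1 := fun c =>
    hζ ▸ single_le_sum (fun i _ => sq_nonneg (ζ i)) (mem_univ c)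
  -- The weights `ζ ^ 2` lie in `[0, 1]`, and the positive and negative parts of `ν` each
  -- sum to `(∑ |ν|) / 2` because `∑ ν = 0`.
  have hupper : ∑ c, ν c * ζ c ^ 2 ≤ ∑ c, (|ν c| + ν c) / 2 := sum_le_sum fun c _ => by
    rcases abs_cases (ν c) with ⟨h, _⟩ | ⟨h, _⟩ <;> nlinarith [hζ1 c, sq_nonneg (ζ c)]
  have hlower : ∑ c, (ν c - |ν c|) / 2 ≤ ∑ c, ν c * ζ c ^ 2 := sum_le_sum fun c _ => by
    rcases abs_cases (ν c) with ⟨h, _⟩ | ⟨h, _⟩ <;> nlinarith [hζ1 c, sq_nonneg (ζ c)]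
  rw [← sum_div, sum_add_distrib, hν] at hupper
  rw [← sum_div, sum_sub_distrib, hν] at hlower
  rw [← le_div_iff₀' two_pos, abs_le]
  constructor <;> linarith

lemma Matrix.dotProduct_conj_mulVec {κ R : Type*} [Fintype κ] [CommSemiring R]
    (U D : Matrix κ κ R) (ζ : κ → R) :
    ζ ⬝ᵥ (U * D * Uᵀ) *ᵥ ζ = (Uᵀ *ᵥ ζ) ⬝ᵥ D *ᵥ (Uᵀ *ᵥ ζ) := by
  rw [← mulVec_mulVec, ← mulVec_mulVec, dotProduct_mulVec, mulVec_transpose]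

lemma two_mul_abs_dotProduct_mulVec_le_of_trace_eq_zero {κ : Type*} [Fintype κ] [DecidableEq κ]
    {M : Matrix κ κ ℝ} (hM : M.IsHermitian) (htr : M.trace = 0) {ζ : κ → ℝ}
    (hζ : ζ ⬝ᵥ ζ = 1) : 2 * |ζ ⬝ᵥ M *ᵥ ζ| ≤ ∑ c, |hM.eigenvalues c| := by
  set U : Matrix κ κ ℝ := ↑hM.eigenvectorUnitary
  have hU : star U = Uᵀ := by rw [star_eq_conjTranspose, conjTranspose_eq_transpose_of_trivial]
  have hM' : M = U * diagonal hM.eigenvalues * Uᵀ := by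
    have h := hM.spectral_theorem
    simp only [conjStarAlgAut_apply, RCLike.ofReal_real_eq_id, Function.id_comp] at h
    rwa [← hU]
  have hUU : U * 1 * Uᵀ = 1 := by
    rw [Matrix.mul_one, ← hU, Unitary.mul_star_self_of_mem hM.eigenvectorUnitary.2]
  have hnorm : ∑ c, (Uᵀ *ᵥ ζ) c ^ 2 = 1 := by
    have h := dotProduct_conj_mulVec U 1 ζ
    rw [hUU, one_mulVec, one_mulVec, hζ] at h
    simpa [dotProduct, sq] using h.symm
  have hquad : ζ ⬝ᵥ M *ᵥ ζ = ∑ c, hM.eigenvalues c * (Uᵀ *ᵥ ζ) c ^ 2 := by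
    rw [congrArg (fun N => ζ ⬝ᵥ N *ᵥ ζ) hM', dotProduct_conj_mulVec]
    simp only [dotProduct, mulVec_diagonal]
    exact sum_congr rfl fun c _ => by ring
  have htrace : ∑ c, hM.eigenvalues c = 0 := by
    simpa [hM.trace_eq_sum_eigenvalues] using htr
  rw [hquad]
  exact two_mul_abs_sum_mul_sq_le htrace hnorm

section ClassFrame

variable {ι α : Type*} [Fintype ι] [DecidableEq α] (C : ι → α) (x : ι → ℝ)

noncomputable def classMass (a : α) : ℝ := ∑ v, if C v = a then x v ^ 2 else 0

/-- Column `a` is the normalised restriction of `x` to the class `C ⁻¹' {a}`; classes on which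
`x` vanishes are dropped so that the columns are orthonormal. -/
noncomputable def classFrame : Matrix ι {a // classMass C x a ≠ 0} ℝ :=
  Matrix.of fun v a => if C v = a then x v / √(classMass C x a) else 0

variable {C x}

lemma classMass_nonneg (a : α) : 0 ≤ classMass C x a :=
  sum_nonneg fun v _ => by split_ifs <;> positivity

lemma sq_le_classMass (v : ι) : x v ^ 2 ≤ classMass C x (C v) := by
  unfold classMass
  simpa using single_le_sum (f := fun u => if C u = C v then x u ^ 2 else 0)
    (fun u _ => by split_ifs <;> positivity) (mem_univ v)

lemma sum_classMass [Fintype α] : ∑ a, classMass C x a = ∑ v, x v ^ 2 := by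
  simp only [classMass]
  rw [sum_comm]
  simp

lemma classFrame_conjTranspose_mul_self :
    (classFrame C x)ᴴ * classFrame C x = 1 := by
  ext a b
  simp only [mul_apply, conjTranspose_apply, star_trivial, classFrame, of_apply]
  by_cases hab : a = b
  · subst hab
    rw [one_apply_eq]
    have hmass : 0 ≤ classMass C x a := classMass_nonneg _
    calc ∑ v, (if C v = a then x v / √(classMass C x a) else 0) *
          (if C v = a then x v / √(classMass C x a) else 0)
        = (∑ v, if C v = a then x v ^ 2 else 0) / classMass C x a := by
          rw [sum_div]
          refine sum_congr rfl fun v _ => ?_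
          split_ifs
          · rw [div_mul_div_comm, Real.mul_self_sqrt hmass, sq]
          · simp
      _ = 1 := div_self a.2
  · rw [one_apply_ne hab]
    refine sum_eq_zero fun v _ => ?_
    split_ifs with ha hb <;> first | exact absurd (Subtype.ext (ha.symm.trans hb)) hab | simp

lemma classFrame_mulVec_sqrt_classMass [Fintype α] :
    classFrame C x *ᵥ (fun a => √(classMass C x a)) = x := by
  ext v
  by_cases hv : classMass C x (C v) = 0
  · have hxv : x v = 0 := pow_eq_zero_iff two_ne_zero |>.mp
      (le_antisymm (hv ▸ sq_le_classMass v) (sq_nonneg _))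
    simp only [mulVec, dotProduct, classFrame, of_apply, hxv]
    refine sum_eq_zero fun a _ => ?_
    rw [if_neg fun (h : C v = a) => a.2 (h ▸ hv)]
    simp
  · simp only [mulVec, dotProduct, classFrame, of_apply]
    rw [sum_eq_single ⟨C v, hv⟩ (fun a _ ha => by
      rw [if_neg fun h => ha (Subtype.ext h.symm), zero_mul]) (by simp)]
    simp only [if_true]
    exact div_mul_cancel₀ _ (Real.sqrt_ne_zero'.mpr ((classMass_nonneg _).lt_of_ne' hv))

lemma sum_sqrt_classMass_sq [Fintype α] :
    ∑ a : {a // classMass C x a ≠ 0}, √(classMass C x a) ^ 2 = ∑ v, x v ^ 2 := calc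
  _ = ∑ a : {a // classMass C x a ≠ 0}, classMass C x a := by
      simp only [Real.sq_sqrt (classMass_nonneg _)]
  _ = ∑ a with classMass C x a ≠ 0, classMass C x a :=
      (sum_subtype _ (fun a => by simp) (classMass C x)).symm
  _ = ∑ v, x v ^ 2 := by rw [sum_filter_ne_zero, sum_classMass]

lemma diag_classFrame_conj_eq_zero {A : Matrix ι ι ℝ} (hA : ∀ u v, C u = C v → A u v = 0)
    (a : {a // classMass C x a ≠ 0}) :
    ((classFrame C x)ᴴ * A * classFrame C x) a a = 0 := by
  simp only [mul_apply, conjTranspose_apply, star_trivial, classFrame, of_apply]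
  refine sum_eq_zero fun v _ => ?_
  by_cases hv : C v = a
  · rw [sum_eq_zero fun u _ => ?_, zero_mul]
    by_cases hu : C u = a
    · rw [hA u v (hu.trans hv.symm), mul_zero]
    · rw [if_neg hu, zero_mul]
  · rw [if_neg hv, mul_zero]

end ClassFrame

lemma two_mul_abs_dotProduct_mulVec_le_kyFanR {n : ℕ} {α : Type*} [Fintype α] [DecidableEq α]
    {A : Matrix (Fin n) (Fin n) ℝ} (hA : A.IsHermitian) (C : Fin n → α)
    (hAC : ∀ u v, C u = C v → A u v = 0) {x : Fin n → ℝ} (hx : x ⬝ᵥ x = 1) :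
    2 * |x ⬝ᵥ A *ᵥ x| ≤ kyFanR A (Fintype.card α) := by
  set E := classFrame C x
  set ξ := fun a : {a // classMass C x a ≠ 0} => √(classMass C x a)
  have hM := isHermitian_conjTranspose_mul_mul E hA
  have hquad : x ⬝ᵥ A *ᵥ x = ξ ⬝ᵥ (Eᴴ * A * E) *ᵥ ξ := by
    rw [← mulVec_mulVec, ← mulVec_mulVec, classFrame_mulVec_sqrt_classMass,
      conjTranspose_eq_transpose_of_trivial, mulVec_transpose, dotProduct_comm ξ,
      ← dotProduct_mulVec, classFrame_mulVec_sqrt_classMass, dotProduct_comm]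
  have hξ : ξ ⬝ᵥ ξ = 1 := by
    rw [← hx]
    simpa [dotProduct, sq] using sum_sqrt_classMass_sq (C := C) (x := x)
  have htr : (Eᴴ * A * E).trace = 0 := sum_eq_zero fun a _ => diag_classFrame_conj_eq_zero hAC a
  calc 2 * |x ⬝ᵥ A *ᵥ x| ≤ ∑ a, |hM.eigenvalues a| := by
        rw [hquad]; exact two_mul_abs_dotProduct_mulVec_le_of_trace_eq_zero hM htr hξ
    _ ≤ kyFanR A (Fintype.card α) :=
        sum_abs_eigenvalues_compression_le_kyFanR hA classFrame_conjTranspose_mul_self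
          (Fintype.card_subtype_le _)

lemma two_mul_svalRSorted_le_kyFanR {n : ℕ} {α : Type*} [Fintype α] [DecidableEq α]
    {A : Matrix (Fin n) (Fin n) ℝ} (hA : A.IsHermitian) (C : Fin n → α)
    (hAC : ∀ u v, C u = C v → A u v = 0) (i : Fin n) :
    2 * svalRSorted A i ≤ kyFanR A (Fintype.card α) := by
  set j := Tuple.sort (fun i => -|hA.eigenvalues i|) i
  set x : Fin n → ℝ := ⇑(hA.eigenvectorBasis j)
  have hx : x ⬝ᵥ x = 1 := by
    have h : inner ℝ (hA.eigenvectorBasis j) (hA.eigenvectorBasis j) = 1 := by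
      rw [real_inner_self_eq_norm_sq, hA.eigenvectorBasis.orthonormal.1 j, one_pow]
    rwa [EuclideanSpace.inner_eq_star_dotProduct, star_trivial] at h
  have hquad : x ⬝ᵥ A *ᵥ x = hA.eigenvalues j := by
    rw [hA.mulVec_eigenvectorBasis, dotProduct_smul, hx, smul_eq_mul, mul_one]
  rw [svalRSorted_eq_of_isHermitian hA, Function.comp_apply, ← hquad]
  exact two_mul_abs_dotProduct_mulVec_le_kyFanR hA C hAC hx

/-- If `G` has chromatic number `χ`, then `‖G‖_{F_χ} ≥ 2 σ₁(G)`. -/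
theorem kyFan_chromatic_ge {n : ℕ} (hn : 0 < n) (G : SimpleGraph (Fin n))
    [DecidableRel G.Adj] (χ : ℕ) (hχ : G.chromaticNumber = χ) :
    kyFanG G χ ≥ 2 * gsvalSorted G ⟨0, hn⟩ := by
  obtain ⟨C⟩ := SimpleGraph.chromaticNumber_le_iff_colorable.mp hχ.le
  have hAC : ∀ u v, C u = C v → G.adjMatrix ℝ u v = 0 := fun u v huv => by
    rw [SimpleGraph.adjMatrix_apply, if_neg fun h => C.valid h huv]
  simpa only [ge_iff_le, kyFanG, gsvalSorted, Fintype.card_fin]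
    using two_mul_svalRSorted_le_kyFanR (adjHerm G) C hAC ⟨0, hn⟩
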